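/- arXiv:1802.06372 — 3 statements merged into one kernel-verified Lean document; each statement's English description precedes it below -/
import Mathlib

section
/- (One-sided Lipschitz condition for the modified nonlinearity, Lemma 2.1, second estimate.) For every δt₀ ∈ (0,1) and every even integer q = 2m with m ∈ ℕ, m ≥ 1, there exists a constant C ∈ (0,∞) such that for every δt ∈ [0, δt₀] and all z₁, z₂ ∈ ℝ, (Ψ_{δt}(z₁) − Ψ_{δt}(z₂))·(z₁ − z₂)^{q−1} ≤ exp(C·δt₀)·|z₁ − z₂|^q. -/
/-- The drift nonlinearity `F(z) = z - z³`. -/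
noncomputable def F (z : ℝ) : ℝ := z - z ^ 3

/-- The flow map `Φ_t(z) = z / sqrt(z² + (1 - z²) exp(-2t))`. -/
noncomputable def Phi (t z : ℝ) : ℝ :=
  z / Real.sqrt (z ^ 2 + (1 - z ^ 2) * Real.exp (-2 * t))

/-- The modified nonlinearity `Ψ_{δt}(z) = (Φ_{δt}(z) - z)/δt` for `δt > 0`, `Ψ_0 = F`. -/
noncomputable def Psi (δt z : ℝ) : ℝ :=
  if δt = 0 then F z else (Phi δt z - z) / δt

/-!
`Φ_t` is the time-`t` flow of `ż = F(z)`, with `Φ_t'(z) = e^{-2t} D^{-3/2}` where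
`D = z² + (1 - z²) e^{-2t} ≥ e^{-2t}`; hence `Φ_t` is `e^t`-Lipschitz. So `Ψ_δt = (Φ_δt - id)/δt` is
one-sided Lipschitz with constant `(e^δt - 1)/δt ≤ e^δt`, and `F` with constant `1`. Multiplying by the
even power `(z₁ - z₂)^(2m-2)` gives the estimate with `C = 1`.
-/

open Real

noncomputable def flowDenom (t z : ℝ) : ℝ := z ^ 2 + (1 - z ^ 2) * exp (-2 * t)

lemma exp_sub_one_le_mul_exp (x : ℝ) : exp x - 1 ≤ x * exp x := by
  have h := mul_le_mul_of_nonneg_left (one_sub_le_exp_neg x) (exp_pos x).le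
  rw [← exp_add, add_neg_cancel, exp_zero] at h
  linarith

section flow

variable {t : ℝ}

lemma exp_neg_two_mul_le_flowDenom (ht : 0 ≤ t) (z : ℝ) : exp (-2 * t) ≤ flowDenom t z := by
  have : exp (-2 * t) ≤ 1 := exp_le_one_iff.mpr (by linarith)
  unfold flowDenom
  nlinarith [sq_nonneg z]

lemma flowDenom_pos (ht : 0 ≤ t) (z : ℝ) : 0 < flowDenom t z :=
  (exp_pos _).trans_le (exp_neg_two_mul_le_flowDenom ht z)

lemma hasDerivAt_flowDenom (t z : ℝ) :
    HasDerivAt (flowDenom t) (2 * z * (1 - exp (-2 * t))) z := by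
  have h := (hasDerivAt_pow 2 z).add (((hasDerivAt_pow 2 z).const_sub 1).mul_const (exp (-2 * t)))
  refine h.congr_deriv ?_
  push_cast
  ring

lemma hasDerivAt_Phi (ht : 0 ≤ t) (z : ℝ) :
    HasDerivAt (Phi t) (exp (-2 * t) / (flowDenom t z * √(flowDenom t z))) z := by
  have hD := flowDenom_pos ht z
  have hsqrt : 0 < √(flowDenom t z) := sqrt_pos.mpr hD
  have h := (hasDerivAt_id' z).div ((hasDerivAt_flowDenom t z).sqrt hD.ne') hsqrt.ne'
  refine h.congr_deriv ?_
  field_simp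
  rw [sq_sqrt hD.le]
  unfold flowDenom
  ring_nf

lemma norm_deriv_Phi_le (ht : 0 ≤ t) (z : ℝ) : ‖deriv (Phi t) z‖ ≤ exp t := by
  have hD := exp_neg_two_mul_le_flowDenom ht z
  have hD₀ := flowDenom_pos ht z
  have hsqrt : √(exp (-2 * t)) = exp (-t) := by
    rw [show -2 * t = -t + -t by ring, exp_add, sqrt_mul_self (exp_pos _).le]
  rw [(hasDerivAt_Phi ht z).deriv, norm_of_nonneg (by positivity)]
  calc exp (-2 * t) / (flowDenom t z * √(flowDenom t z))
      ≤ exp (-2 * t) / (exp (-2 * t) * √(exp (-2 * t))) := by gcongr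
    _ = exp t := by
        rw [hsqrt, ← exp_add, ← exp_sub]
        ring_nf

lemma abs_Phi_sub_le (ht : 0 ≤ t) (z₁ z₂ : ℝ) :
    |Phi t z₁ - Phi t z₂| ≤ exp t * |z₁ - z₂| := by
  simpa only [norm_eq_abs] using convex_univ.norm_image_sub_le_of_norm_deriv_le
    (fun z _ => (hasDerivAt_Phi ht z).differentiableAt) (fun z _ => norm_deriv_Phi_le ht z)
    (Set.mem_univ z₂) (Set.mem_univ z₁)

end flow

lemma F_sub_mul_sub_le (z₁ z₂ : ℝ) : (F z₁ - F z₂) * (z₁ - z₂) ≤ (z₁ - z₂) ^ 2 := by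
  have : 0 ≤ (z₁ - z₂) ^ 2 * (z₁ ^ 2 + z₁ * z₂ + z₂ ^ 2) :=
    mul_nonneg (sq_nonneg _) (by nlinarith [sq_nonneg (z₁ + z₂)])
  unfold F
  linear_combination this

lemma Psi_sub_mul_sub_le {δt : ℝ} (hδt : 0 ≤ δt) (z₁ z₂ : ℝ) :
    (Psi δt z₁ - Psi δt z₂) * (z₁ - z₂) ≤ exp δt * (z₁ - z₂) ^ 2 := by
  rcases hδt.eq_or_lt with rfl | hpos
  · simpa [Psi] using
      (F_sub_mul_sub_le z₁ z₂).trans (le_mul_of_one_le_left (sq_nonneg _) (one_le_exp le_rfl))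
  have hPhi : (Phi δt z₁ - Phi δt z₂) * (z₁ - z₂) ≤ exp δt * (z₁ - z₂) ^ 2 :=
    calc (Phi δt z₁ - Phi δt z₂) * (z₁ - z₂) ≤ |Phi δt z₁ - Phi δt z₂| * |z₁ - z₂| := by
          rw [← abs_mul]; exact le_abs_self _
      _ ≤ exp δt * |z₁ - z₂| * |z₁ - z₂| := by gcongr; exact abs_Phi_sub_le hδt z₁ z₂
      _ = exp δt * (z₁ - z₂) ^ 2 := by rw [mul_assoc, ← abs_mul, ← sq, abs_sq]
  have hexp := mul_le_mul_of_nonneg_right (exp_sub_one_le_mul_exp δt) (sq_nonneg (z₁ - z₂))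
  simp only [Psi, if_neg hpos.ne']
  rw [div_sub_div_same, div_mul_eq_mul_div, div_le_iff₀ hpos]
  linarith

lemma mul_pow_odd_le_of_mul_le {a c d : ℝ} (h : a * d ≤ c * d ^ 2) {m : ℕ} (hm : 1 ≤ m) :
    a * d ^ (2 * m - 1) ≤ c * |d| ^ (2 * m) := by
  obtain ⟨k, rfl⟩ : ∃ k, m = k + 1 := ⟨m - 1, by omega⟩
  rw [show 2 * (k + 1) - 1 = 2 * k + 1 by omega, pow_mul, sq_abs, pow_succ, pow_mul]
  calc a * ((d ^ 2) ^ k * d) = a * d * (d ^ 2) ^ k := by ring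
    _ ≤ c * d ^ 2 * (d ^ 2) ^ k := by gcongr
    _ = c * ((d ^ 2) ^ k * d ^ 2) := by ring

theorem psi_one_sided_lipschitz_general (δt₀ : ℝ)
    (m : ℕ) (hm : 1 ≤ m) :
    ∃ C : ℝ, 0 < C ∧ ∀ δt ∈ Set.Icc (0 : ℝ) δt₀, ∀ z₁ z₂ : ℝ,
      (Psi δt z₁ - Psi δt z₂) * (z₁ - z₂) ^ (2 * m - 1)
        ≤ Real.exp (C * δt₀) * |z₁ - z₂| ^ (2 * m) := by
  refine ⟨1, one_pos, fun δt hδt z₁ z₂ => ?_⟩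
  calc (Psi δt z₁ - Psi δt z₂) * (z₁ - z₂) ^ (2 * m - 1)
      ≤ exp δt * |z₁ - z₂| ^ (2 * m) :=
        mul_pow_odd_le_of_mul_le (Psi_sub_mul_sub_le hδt.1 z₁ z₂) hm
    _ ≤ exp (1 * δt₀) * |z₁ - z₂| ^ (2 * m) := by
        rw [one_mul]
        gcongr
        exact hδt.2

/-- One-sided Lipschitz condition for the modified nonlinearity (Lemma 2.1, second
estimate): for every `δt₀ ∈ (0,1)` and every even integer `q = 2m`, `m ≥ 1`, there is
`C ∈ (0,∞)` such that for every `δt ∈ [0, δt₀]` and all `z₁, z₂ ∈ ℝ`,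
`(Ψ_{δt}(z₁) - Ψ_{δt}(z₂))(z₁ - z₂)^{q-1} ≤ exp(C δt₀) |z₁ - z₂|^q`. -/
theorem psi_one_sided_lipschitz (δt₀ : ℝ) (h₀ : δt₀ ∈ Set.Ioo (0 : ℝ) 1)
    (m : ℕ) (hm : 1 ≤ m) :
    ∃ C : ℝ, 0 < C ∧ ∀ δt ∈ Set.Icc (0 : ℝ) δt₀, ∀ z₁ z₂ : ℝ,
      (Psi δt z₁ - Psi δt z₂) * (z₁ - z₂) ^ (2 * m - 1)
        ≤ Real.exp (C * δt₀) * |z₁ - z₂| ^ (2 * m) :=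
  psi_one_sided_lipschitz_general δt₀ m hm
end

section
/- (Local Lipschitz continuity of the modified nonlinearity, Lemma 2.1, third estimate.) For every δt₀ ∈ (0,1) there exists a constant C(δt₀) ∈ (0,∞) such that for every δt ∈ [0, δt₀] and all z₁, z₂ ∈ ℝ, |Ψ_{δt}(z₁) − Ψ_{δt}(z₂)| ≤ C(δt₀)·|z₁ − z₂|·(1 + z₁² + z₂²). -/
/-
With `e = exp (-2 δt)` and `u = z² + (1 - z²) e ≥ e`, the derivative of `Φ_{δt}` is `e / u^{3/2}`.
Splitting `e - u^{3/2} = e (1 - √e) - (u^{3/2} - e^{3/2})`, both pieces are at most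
`(1 - e)(1 + 2 z² √u)`, and `1 - e ≤ 2 δt`; hence `|Ψ_{δt}'(z)| ≤ 4 exp (4 δt) (1 + z²)`.
The mean value theorem on `[z₁, z₂]`, where `x² ≤ z₁² + z₂²`, gives the claim with
`C = 4 exp (4 δt₀)`.
-/

open Real

theorem abs_sub_le_of_hasDerivAt_of_abs_le {f f' : ℝ → ℝ} {K : ℝ}
    (hf : ∀ x, HasDerivAt f (f' x) x) (hf' : ∀ x, |f' x| ≤ K * (1 + x ^ 2)) (z₁ z₂ : ℝ) :
    |f z₁ - f z₂| ≤ K * |z₁ - z₂| * (1 + z₁ ^ 2 + z₂ ^ 2) := by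
  have hK : 0 ≤ K := by simpa using (abs_nonneg _).trans (hf' 0)
  have hsq : ∀ x ∈ Set.uIcc z₂ z₁, 1 + x ^ 2 ≤ 1 + z₁ ^ 2 + z₂ ^ 2 := by
    intro x hx
    rcases Set.mem_uIcc.mp hx with ⟨h₁, h₂⟩ | ⟨h₁, h₂⟩ <;> rcases le_total 0 x with h | h <;>
      nlinarith
  have := (convex_uIcc z₂ z₁).norm_image_sub_le_of_norm_hasDerivWithin_le
    (fun x _ => (hf x).hasDerivWithinAt)
    (fun x hx => (hf' x).trans (mul_le_mul_of_nonneg_left (hsq x hx) hK))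
    Set.left_mem_uIcc Set.right_mem_uIcc
  simp only [Real.norm_eq_abs] at this
  linarith

theorem F_abs_sub_le (z₁ z₂ : ℝ) : |F z₁ - F z₂| ≤ 3 * |z₁ - z₂| * (1 + z₁ ^ 2 + z₂ ^ 2) := by
  refine abs_sub_le_of_hasDerivAt_of_abs_le (f' := fun x => 1 - 3 * x ^ 2) (fun x => ?_)
    (fun x => abs_le.mpr ⟨by nlinarith [sq_nonneg x], by nlinarith [sq_nonneg x]⟩) z₁ z₂
  exact ((hasDerivAt_id' x).sub (hasDerivAt_pow 3 x)).congr_deriv (by ring)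

section

variable {e : ℝ}

theorem le_sq_add_one_sub_sq_mul (he1 : e ≤ 1) (z : ℝ) : e ≤ z ^ 2 + (1 - z ^ 2) * e := by
  nlinarith [mul_nonneg (sq_nonneg z) (sub_nonneg.mpr he1)]

theorem hasDerivAt_div_sqrt (he0 : 0 < e) (he1 : e ≤ 1) (z : ℝ) :
    HasDerivAt (fun z => z / √(z ^ 2 + (1 - z ^ 2) * e))
      (e / ((z ^ 2 + (1 - z ^ 2) * e) * √(z ^ 2 + (1 - z ^ 2) * e))) z := by
  have hu : 0 < z ^ 2 + (1 - z ^ 2) * e := he0.trans_le (le_sq_add_one_sub_sq_mul he1 z)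
  have hs : 0 < √(z ^ 2 + (1 - z ^ 2) * e) := sqrt_pos.mpr hu
  have hinner : HasDerivAt (fun z => z ^ 2 + (1 - z ^ 2) * e) (2 * z * (1 - e)) z :=
    ((hasDerivAt_pow 2 z).add (((hasDerivAt_const z 1).sub (hasDerivAt_pow 2 z)).mul_const e)
      ).congr_deriv (by ring)
  refine ((hasDerivAt_id' z).div (hinner.sqrt hu.ne') hs.ne').congr_deriv ?_
  have hs2 := sq_sqrt hu.le
  field_simp
  rw [hs2]
  ring

theorem abs_div_mul_sqrt_sub_one_le (he0 : 0 < e) (he1 : e ≤ 1) (z : ℝ) :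
    |e / ((z ^ 2 + (1 - z ^ 2) * e) * √(z ^ 2 + (1 - z ^ 2) * e)) - 1| ≤
      (1 - e) * (1 + 2 * z ^ 2) / e ^ 2 := by
  set u := z ^ 2 + (1 - z ^ 2) * e
  have heu : e ≤ u := le_sq_add_one_sub_sq_mul he1 z
  set s := √u
  set q := √e
  have hs2 : s ^ 2 = u := sq_sqrt (he0.le.trans heu)
  have hq2 : q ^ 2 = e := sq_sqrt he0.le
  have hqs : q ≤ s := sqrt_le_sqrt heu
  have hq1 : q ≤ 1 := sqrt_le_one.mpr he1
  have heq : e ≤ q := by nlinarith [sqrt_nonneg e]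
  have hs0 : 0 < s := he0.trans_le (heq.trans hqs)
  have hcube : s ^ 3 - q ^ 3 ≤ 2 * (s ^ 2 - q ^ 2) * s := by
    nlinarith [mul_nonneg (sub_nonneg.mpr hqs) (sqrt_nonneg e)]
  have hnum : |e - u * s| ≤ (1 - e) * (1 + 2 * z ^ 2 * s) := by
    have hsplit : e - u * s = e * (1 - q) - (s ^ 3 - q ^ 3) := by
      rw [← hs2, ← hq2]; ring
    rw [hsplit, abs_le]
    constructor <;> nlinarith [pow_le_pow_left₀ (sqrt_nonneg e) hqs 3]
  have hus : e ^ 2 ≤ u * s := by nlinarith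
  have hus0 : 0 < u * s := (pow_pos he0 2).trans_le hus
  rw [div_sub_one hus0.ne', abs_div, abs_of_pos hus0, div_le_div_iff₀ hus0 (by positivity)]
  have he2u : e ^ 2 ≤ u := by nlinarith
  have hden : (1 + 2 * z ^ 2 * s) * e ^ 2 ≤ (1 + 2 * z ^ 2) * (u * s) := by
    nlinarith [mul_le_mul_of_nonneg_left he2u (by positivity : 0 ≤ z ^ 2 * s)]
  calc |e - u * s| * e ^ 2 ≤ (1 - e) * ((1 + 2 * z ^ 2 * s) * e ^ 2) := by
        rw [← mul_assoc]; gcongr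
    _ ≤ (1 - e) * ((1 + 2 * z ^ 2) * (u * s)) := by gcongr
    _ = (1 - e) * (1 + 2 * z ^ 2) * (u * s) := by ring

end

theorem Psi_zero : Psi 0 = F := by
  funext z
  simp [Psi]

theorem Psi_of_ne_zero {δt : ℝ} (hδ : δt ≠ 0) : Psi δt = fun z => (Phi δt z - z) / δt := by
  funext z
  simp [Psi, hδ]

theorem Psi_abs_sub_le_of_pos {δt : ℝ} (hδ : 0 < δt) (z₁ z₂ : ℝ) :
    |Psi δt z₁ - Psi δt z₂| ≤ 4 * exp (4 * δt) * |z₁ - z₂| * (1 + z₁ ^ 2 + z₂ ^ 2) := by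
  set e := exp (-2 * δt)
  have he0 : 0 < e := exp_pos _
  have he1 : e ≤ 1 := exp_le_one_iff.mpr (by linarith)
  have hsub : 1 - e ≤ 2 * δt := by linarith [add_one_le_exp (-2 * δt)]
  have he2 : (e ^ 2)⁻¹ = exp (4 * δt) := by
    rw [← exp_nat_mul, ← exp_neg]; ring_nf
  rw [Psi_of_ne_zero hδ.ne']
  refine abs_sub_le_of_hasDerivAt_of_abs_le
    (fun z => (((hasDerivAt_div_sqrt he0 he1 z).sub (hasDerivAt_id' z)).div_const δt))
    (fun z => ?_) z₁ z₂
  rw [abs_div, abs_of_pos hδ, div_le_iff₀ hδ]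
  calc _ ≤ (1 - e) * (1 + 2 * z ^ 2) / e ^ 2 := abs_div_mul_sqrt_sub_one_le he0 he1 z
    _ = (1 - e) * (1 + 2 * z ^ 2) * exp (4 * δt) := by rw [div_eq_mul_inv, he2]
    _ ≤ 2 * δt * (2 * (1 + z ^ 2)) * exp (4 * δt) := by gcongr; linarith
    _ = _ := by ring

theorem Psi_abs_sub_le {δt : ℝ} (hδ : 0 ≤ δt) (z₁ z₂ : ℝ) :
    |Psi δt z₁ - Psi δt z₂| ≤ 4 * exp (4 * δt) * |z₁ - z₂| * (1 + z₁ ^ 2 + z₂ ^ 2) := by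
  rcases hδ.eq_or_lt with rfl | hδ
  · rw [Psi_zero]
    refine (F_abs_sub_le z₁ z₂).trans ?_
    gcongr
    norm_num
  · exact Psi_abs_sub_le_of_pos hδ z₁ z₂

theorem psi_local_lipschitz_general (δt₀ : ℝ) :
    ∃ C : ℝ, 0 < C ∧ ∀ δt ∈ Set.Icc (0 : ℝ) δt₀, ∀ z₁ z₂ : ℝ,
      |Psi δt z₁ - Psi δt z₂| ≤ C * |z₁ - z₂| * (1 + z₁ ^ 2 + z₂ ^ 2) := by
  refine ⟨4 * exp (4 * δt₀), by positivity, ?_⟩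
  rintro δt ⟨hδ0, hδ⟩ z₁ z₂
  calc |Psi δt z₁ - Psi δt z₂| ≤ 4 * exp (4 * δt) * |z₁ - z₂| * (1 + z₁ ^ 2 + z₂ ^ 2) :=
        Psi_abs_sub_le hδ0 z₁ z₂
    _ ≤ 4 * exp (4 * δt₀) * |z₁ - z₂| * (1 + z₁ ^ 2 + z₂ ^ 2) := by gcongr

/-- Local Lipschitz continuity of the modified nonlinearity (Lemma 2.1, third
estimate): for every `δt₀ ∈ (0,1)` there is `C(δt₀) ∈ (0,∞)` such that for every
`δt ∈ [0, δt₀]` and all `z₁, z₂ ∈ ℝ`,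
`|Ψ_{δt}(z₁) - Ψ_{δt}(z₂)| ≤ C(δt₀) |z₁ - z₂| (1 + z₁² + z₂²)`. -/
theorem psi_local_lipschitz (δt₀ : ℝ) (h₀ : δt₀ ∈ Set.Ioo (0 : ℝ) 1) :
    ∃ C : ℝ, 0 < C ∧ ∀ δt ∈ Set.Icc (0 : ℝ) δt₀, ∀ z₁ z₂ : ℝ,
      |Psi δt z₁ - Psi δt z₂| ≤ C * |z₁ - z₂| * (1 + z₁ ^ 2 + z₂ ^ 2) :=
  psi_local_lipschitz_general δt₀
end

section
/- (L^q consistency estimate for the modified nonlinearity, the core of the order-one estimate in Proposition 3.1.) Let (O, μ) be a measure space with μ(O) < ∞, let q ∈ [1, ∞), and let δt₀ ∈ (0,1). There exists a constant C = C(δt₀, q, μ(O)) ∈ (0,∞) such that for every δt ∈ [0, δt₀] and every measurable function u : O → ℝ with finite L^{5q}(μ) norm, ‖Ψ_{δt}∘u − F∘u‖_{L^q(μ)} ≤ C·δt·(1 + ‖u‖_{L^{5q}(μ)}⁵). -/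
/-!
Write `s = z²`, `a = exp (-2t)` and `ε = (1 - s)(1 - a)`, so that `Φ_t(z) = z / √(1 - ε)`.
Since `0 ≤ 1 - a ≤ 2t` and `1 - a = 2t + O(t²)`, we have `|ε| ≤ 2t(1 + s)`, and the
expansion `1/√(1 - ε) = 1 + ε/2 + O(ε²)` (uniform because `1 - ε ≥ a ≥ e⁻² > 1/9`) gives
`Φ_t(z) - z - t F(z) = O(t² |z| (1 + z²)²) = O(t² (1 + |z|⁵))` for `t ≤ 1`.
Dividing by `δt` yields `|Ψ_{δt}(z) - F(z)| ≤ 40 δt (1 + |z|⁵)`, and Minkowski's inequality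
in `L^q` together with `‖ |u|⁵ ‖_{L^q} = ‖u‖_{L^{5q}}⁵` turns this into the `L^q` estimate.
-/
open MeasureTheory

open Real
open scoped ENNReal

lemma abs_one_sub_exp_neg_sub_le {x : ℝ} (hx : 0 ≤ x) : |1 - exp (-x) - x| ≤ x ^ 2 := by
  have hlow : 1 - x ≤ exp (-x) := by linarith [add_one_le_exp (-x)]
  have hprod : exp (-x) * exp x = 1 := by rw [← exp_add, neg_add_cancel, exp_zero]
  have hquad := quadratic_le_exp_of_nonneg hx
  rw [abs_le]
  constructor <;> nlinarith [exp_pos (-x), sq_nonneg x, pow_nonneg hx 3]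

lemma one_div_nine_le_exp_neg_two : (1 : ℝ) / 9 ≤ exp (-2) := by
  rw [exp_neg, one_div, inv_le_inv₀ (by norm_num) (exp_pos 2),
    show (2 : ℝ) = 1 + 1 by norm_num, exp_add]
  nlinarith [exp_one_lt_d9, exp_pos 1]

lemma abs_one_div_sqrt_sub_one_sub_le {D : ℝ} (hD : 1 / 9 ≤ D) :
    |1 / √D - 1 - (1 - D) / 2| ≤ 2 * (1 - D) ^ 2 := by
  set r := √D with hr
  have hr3 : 1 / 3 ≤ r := by
    rw [hr, show (1 : ℝ) / 3 = √(1 / 9) by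
      rw [show (1 : ℝ) / 9 = (1 / 3) ^ 2 by norm_num, sqrt_sq (by norm_num)]]
    exact sqrt_le_sqrt hD
  have hr2 : r ^ 2 = D := sq_sqrt (by linarith)
  -- second-order Taylor remainder of `r ↦ 1 / r` around `r = 1`, in terms of `1 - r²`
  have hexpand :
      1 / r - 1 - (1 - r ^ 2) / 2 = (1 - r ^ 2) ^ 2 * (2 + r) / (2 * r * (1 + r) ^ 2) := by
    field_simp
    ring
  rw [← hr2, hexpand, abs_of_nonneg (by positivity), div_le_iff₀ (by positivity)]
  have hfac : 2 + r ≤ 4 * r * (1 + r) ^ 2 := by nlinarith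
  nlinarith [sq_nonneg (1 - r ^ 2)]

lemma abs_mul_one_add_sq_sq_le (w : ℝ) : |w| * (1 + w ^ 2) ^ 2 ≤ 4 * (1 + |w| ^ 5) := by
  have hw := abs_nonneg w
  rw [← sq_abs w]
  nlinarith [sq_nonneg (|w| - 1), sq_nonneg (|w| ^ 2 - 1), mul_nonneg hw (sq_nonneg (|w| - 1)),
    pow_nonneg hw 3, mul_nonneg (pow_nonneg hw 3) (sq_nonneg (|w| - 1))]

lemma abs_Phi_sub_sub_mul_F_le {t : ℝ} (ht0 : 0 ≤ t) (ht1 : t ≤ 1) (z : ℝ) :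
    |Phi t z - z - t * F z| ≤ 40 * t ^ 2 * (1 + |z| ^ 5) := by
  set s := z ^ 2
  set a := exp (-2 * t)
  have ha : |1 - a - 2 * t| ≤ 4 * t ^ 2 := by
    have h := abs_one_sub_exp_neg_sub_le (by positivity : 0 ≤ 2 * t)
    rwa [← neg_mul, mul_pow, show (2 : ℝ) ^ 2 = 4 by norm_num] at h
  have ha0 : 0 ≤ 1 - a := by simp only [a, sub_nonneg, exp_le_one_iff]; linarith
  have ha1 : 1 - a ≤ 2 * t := by linarith [add_one_le_exp (-2 * t)]
  have hs : |1 - s| ≤ 1 + s := abs_le.2 ⟨by linarith [sq_nonneg z], by linarith [sq_nonneg z]⟩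
  set ε := (1 - s) * (1 - a)
  have hε : |ε| ≤ (1 + s) * (2 * t) := by
    rw [abs_mul, abs_of_nonneg ha0]
    exact mul_le_mul hs ha1 ha0 (by positivity)
  have hD : 1 / 9 ≤ 1 - ε := by
    calc (1 : ℝ) / 9 ≤ exp (-2) := one_div_nine_le_exp_neg_two
      _ ≤ a := exp_le_exp.2 (by linarith)
      _ ≤ 1 - ε := by nlinarith [sq_nonneg z]
  have hsplit : Phi t z - z - t * F z
      = z * ((1 / √(1 - ε) - 1 - ε / 2) + (1 - s) * ((1 - a) - 2 * t) / 2) := by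
    rw [Phi, show z ^ 2 + (1 - z ^ 2) * a = 1 - ε by ring, F]
    ring
  have hfirst := abs_one_div_sqrt_sub_one_sub_le hD
  rw [sub_sub_cancel] at hfirst
  have hs0 : 0 ≤ s := sq_nonneg z
  have hsecond : |(1 - s) * ((1 - a) - 2 * t) / 2| ≤ 2 * t ^ 2 * (1 + s) := by
    rw [abs_div, abs_mul, abs_two]
    nlinarith [mul_le_mul hs ha (abs_nonneg _) (by positivity)]
  have hε2 : ε ^ 2 ≤ 4 * t ^ 2 * (1 + s) ^ 2 := by
    nlinarith [sq_abs ε, abs_nonneg ε]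
  calc |Phi t z - z - t * F z| ≤ |z| * (10 * t ^ 2 * (1 + s) ^ 2) := by
        rw [hsplit, abs_mul]
        refine mul_le_mul_of_nonneg_left ?_ (abs_nonneg z)
        have hs1 : t ^ 2 * (1 + s) ≤ t ^ 2 * (1 + s) ^ 2 := by
          apply mul_le_mul_of_nonneg_left _ (sq_nonneg t); nlinarith
        linarith [abs_add_le (1 / √(1 - ε) - 1 - ε / 2) ((1 - s) * ((1 - a) - 2 * t) / 2)]
    _ = 10 * t ^ 2 * (|z| * (1 + z ^ 2) ^ 2) := by ring
    _ ≤ 40 * t ^ 2 * (1 + |z| ^ 5) := by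
        nlinarith [abs_mul_one_add_sq_sq_le z, sq_nonneg t]

lemma abs_Psi_sub_F_le {δt : ℝ} (h0 : 0 ≤ δt) (h1 : δt ≤ 1) (z : ℝ) :
    |Psi δt z - F z| ≤ 40 * δt * (1 + |z| ^ 5) := by
  rcases h0.eq_or_lt with rfl | hpos
  · simp [Psi]
  rw [Psi, if_neg hpos.ne', div_sub' hpos.ne', abs_div, abs_of_pos hpos, div_le_iff₀ hpos]
  calc |Phi δt z - z - δt * F z| ≤ 40 * δt ^ 2 * (1 + |z| ^ 5) :=
        abs_Phi_sub_sub_mul_F_le h0 h1 z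
    _ = 40 * δt * (1 + |z| ^ 5) * δt := by ring

section LpBound

variable {α E G : Type*} [MeasurableSpace α] {μ : Measure α}
  [NormedAddCommGroup E] [NormedAddCommGroup G] {p : ℝ≥0∞} {u : α → E}

lemma eLpNorm_one_add_norm_pow_le (hp : 1 ≤ p) (hu : AEStronglyMeasurable u μ) {k : ℕ}
    (hk : k ≠ 0) :
    eLpNorm (fun x => 1 + ‖u x‖ ^ k) p μ
      ≤ eLpNorm (fun _ => (1 : ℝ)) p μ + eLpNorm u (p * k) μ ^ k := by
  have hpow : eLpNorm (fun x => ‖u x‖ ^ k) p μ = eLpNorm u (p * k) μ ^ k := by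
    have h := eLpNorm_norm_rpow (p := p) (μ := μ) u (q := k) (by positivity)
    simpa only [rpow_natCast, ENNReal.rpow_natCast, ENNReal.ofReal_natCast] using h
  rw [← hpow]
  exact eLpNorm_add_le aestronglyMeasurable_const (hu.norm.pow k) hp

lemma eLpNorm_le_of_norm_le_mul_one_add_norm_pow [IsFiniteMeasure μ] (hp : 1 ≤ p)
    (hu : AEStronglyMeasurable u μ) {k : ℕ} (hk : k ≠ 0) {f : α → G} {c : ℝ}
    (hc : 0 ≤ c) (hf : ∀ x, ‖f x‖ ≤ c * (1 + ‖u x‖ ^ k)) :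
    eLpNorm f p μ
      ≤ ENNReal.ofReal c * max 1 (eLpNorm (fun _ => (1 : ℝ)) p μ)
          * (1 + eLpNorm u (p * k) μ ^ k) := by
  set A := eLpNorm (fun _ : α => (1 : ℝ)) p μ
  set X := eLpNorm u (p * k) μ ^ k
  calc eLpNorm f p μ ≤ eLpNorm (c • fun x => 1 + ‖u x‖ ^ k) p μ := eLpNorm_mono_real hf
    _ = ENNReal.ofReal c * eLpNorm (fun x => 1 + ‖u x‖ ^ k) p μ := by
        rw [eLpNorm_const_smul, Real.enorm_eq_ofReal hc]
    _ ≤ ENNReal.ofReal c * (A + X) := by gcongr; exact eLpNorm_one_add_norm_pow_le hp hu hk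
    _ ≤ ENNReal.ofReal c * (max 1 A * (1 + X)) := by
        gcongr
        rw [mul_add, mul_one]
        exact add_le_add (le_max_right 1 A) (le_mul_of_one_le_left' (le_max_left 1 A))
    _ = _ := (mul_assoc _ _ _).symm

end LpBound

/-- `L^q` consistency estimate for the modified nonlinearity (core of the order-one
estimate in Proposition 3.1): on a finite measure space, for `q ∈ [1,∞)` and
`δt₀ ∈ (0,1)` there is `C = C(δt₀, q, μ(O)) > 0` such that for every `δt ∈ [0, δt₀]`
and every measurable `u` with finite `L^{5q}` norm,
`‖Ψ_{δt}∘u - F∘u‖_{L^q} ≤ C δt (1 + ‖u‖_{L^{5q}}⁵)`. -/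
theorem psi_Lq_consistency {O : Type*} [MeasurableSpace O] (μ : Measure O)
    [IsFiniteMeasure μ] (q : ℝ) (hq : 1 ≤ q) (δt₀ : ℝ) (h₀ : δt₀ ∈ Set.Ioo (0 : ℝ) 1) :
    ∃ C : ℝ, 0 < C ∧ ∀ δt ∈ Set.Icc (0 : ℝ) δt₀, ∀ u : O → ℝ,
      Measurable u →
      eLpNorm u (ENNReal.ofReal (5 * q)) μ < ⊤ →
      eLpNorm (fun x => Psi δt (u x) - F (u x)) (ENNReal.ofReal q) μ
        ≤ ENNReal.ofReal (C * δt) *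
            (1 + eLpNorm u (ENNReal.ofReal (5 * q)) μ ^ 5) := by
  set K := max 1 (eLpNorm (fun _ : O => (1 : ℝ)) (ENNReal.ofReal q) μ)
  have hK : K ≠ ∞ := max_ne_top ENNReal.one_ne_top (memLp_const 1).eLpNorm_ne_top
  have hK0 : K ≠ 0 := (zero_lt_one.trans_le (le_max_left _ _)).ne'
  refine ⟨40 * K.toReal, mul_pos (by norm_num) (ENNReal.toReal_pos hK0 hK), ?_⟩
  rintro δt ⟨hδt0, hδt⟩ u hu -
  have h5q : ENNReal.ofReal q * (5 : ℕ) = ENNReal.ofReal (5 * q) := by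
    rw [mul_comm 5 q, ENNReal.ofReal_mul (by linarith)]; norm_num
  have hbound := eLpNorm_le_of_norm_le_mul_one_add_norm_pow (μ := μ) (k := 5)
    (f := fun x => Psi δt (u x) - F (u x)) (ENNReal.one_le_ofReal.2 hq) hu.aestronglyMeasurable
    (by norm_num) (by positivity : 0 ≤ 40 * δt)
    fun x => by
      simpa only [Real.norm_eq_abs] using abs_Psi_sub_F_le hδt0 (hδt.trans h₀.2.le) (u x)
  rw [h5q] at hbound
  refine hbound.trans_eq ?_
  rw [mul_right_comm 40, ENNReal.ofReal_mul (by positivity : (0 : ℝ) ≤ 40 * δt),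
    ENNReal.ofReal_toReal hK]
end
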